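/- arXiv:2206.05767 — 3 statements merged into one kernel-verified Lean document; each statement's English description precedes it below -/
import Mathlib

section
/- Let R be a commutative ring and M a Lucas R-module. Then Ext¹_R(R/I, M) = 0 for every semi-regular ideal I of R (not necessarily finitely generated). -/
open CategoryTheory

universe u

/-- An ideal is dense if its annihilator in `R` is zero. -/
def Ideal.IsDense {R : Type u} [CommRing R] (I : Ideal R) : Prop :=
  ∀ r : R, (∀ a ∈ I, a * r = 0) → r = 0

/-- An ideal is semi-regular if it contains a finitely generated dense subideal. -/
def Ideal.IsSemiRegular {R : Type u} [CommRing R] (I : Ideal R) : Prop :=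
  ∃ J : Ideal R, J ≤ I ∧ J.FG ∧ J.IsDense

/-- Membership in `𝒬`: finitely generated semi-regular ideals. -/
def Ideal.IsInQ {R : Type u} [CommRing R] (I : Ideal R) : Prop :=
  I.FG ∧ I.IsSemiRegular

/-- An `R`-module is `𝒬`-torsion if every element is annihilated by some `I ∈ 𝒬`. -/
def IsQTorsion (R : Type u) [CommRing R] (M : Type u) [AddCommGroup M] [Module R M] : Prop :=
  ∀ x : M, ∃ I : Ideal R, I.IsInQ ∧ ∀ a ∈ I, a • x = 0

/-- An `R`-module is `𝒬`-torsion-free if no nonzero element is annihilated by any `I ∈ 𝒬`. -/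
def IsQTorsionFree (R : Type u) [CommRing R] (M : Type u) [AddCommGroup M] [Module R M] : Prop :=
  ∀ x : M, (∃ I : Ideal R, I.IsInQ ∧ ∀ a ∈ I, a • x = 0) → x = 0

/-- `Ext¹_R(A, B) = 0`. -/
def Ext1Vanishes (R : Type u) [CommRing R] (A B : Type u) [AddCommGroup A] [Module R A]
    [AddCommGroup B] [Module R B] : Prop :=
  Subsingleton (((Ext R (ModuleCat.{u} R) 1).obj (Opposite.op (ModuleCat.of R A))).obj
    (ModuleCat.of R B))

/-- A Lucas module is a `𝒬`-torsion-free module `M` with `Ext¹_R(R/I, M) = 0` for all `I ∈ 𝒬`. -/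
def IsLucasModule (R : Type u) [CommRing R] (M : Type u) [AddCommGroup M] [Module R M] : Prop :=
  IsQTorsionFree R M ∧ ∀ I : Ideal R, I.IsInQ → Ext1Vanishes R (R ⧸ I) M

/-!
Because `R` is projective, `Ext¹_R(R/I, M) = 0` exactly when every homomorphism `I → M` extends
to `R`; via an arbitrary projective resolution of `R/I` this is a Schanuel-type comparison of the
kernels of two projective covers of `R/I`. Now let `J ⊆ I` be finitely generated and dense, so
that `J ∈ 𝒬`. Given `φ : I → M`, extend `φ|_J` to `G : R → M`; for `a ∈ J` and `i ∈ I` we have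
`a • (φ i - G i) = φ (a i) - G (a i) = 0`, so `φ - G|_I` is killed by `J` and vanishes because
`M` is `𝒬`-torsion-free.
-/

open LinearMap

def Submodule.HomsExtend {R P : Type*} [CommRing R] [AddCommGroup P] [Module R P]
    (K : Submodule R P) (M : Type*) [AddCommGroup M] [Module R M] : Prop :=
  Function.Surjective fun G : P →ₗ[R] M => G.domRestrict K

theorem Ideal.homsExtend_of_le {R : Type*} [CommRing R] {M : Type*} [AddCommGroup M]
    [Module R M] {I J : Ideal R} (hJI : J ≤ I) (hJ : J.HomsExtend M)
    (hM : ∀ x : M, (∀ a ∈ J, a • x = 0) → x = 0) : I.HomsExtend M := by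
  intro g
  obtain ⟨G, hG⟩ := hJ (g ∘ₗ Submodule.inclusion hJI)
  refine ⟨G, LinearMap.ext fun i => (sub_eq_zero.mp (hM _ fun a ha => ?_)).symm⟩
  have hai : a * i ∈ J := J.mul_mem_right _ ha
  have hGa : G (a * i) = g (a • i) := LinearMap.congr_fun hG ⟨a * i, hai⟩
  simp only [domRestrict_apply, smul_sub, ← map_smul, smul_eq_mul, hGa, sub_self]

namespace Submodule

variable {R : Type*} [CommRing R] {M : Type*} [AddCommGroup M] [Module R M]
variable {P P' N : Type*} [AddCommGroup P] [Module R P] [AddCommGroup P'] [Module R P']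
  [AddCommGroup N] [Module R N]

theorem homsExtend_ker_of_homsExtend_ker [Module.Projective R P] [Module.Projective R P']
    {p : P →ₗ[R] N} {p' : P' →ₗ[R] N} (hp : Function.Surjective p)
    (hp' : Function.Surjective p') (h : (ker p').HomsExtend M) : (ker p).HomsExtend M := by
  obtain ⟨α, hα⟩ := Module.projective_lifting_property p' p hp'
  obtain ⟨β, hβ⟩ := Module.projective_lifting_property p p' hp
  have hpβ (y : P') : p (β y) = p' y := LinearMap.congr_fun hβ y
  have hp'α (x : P) : p' (α x) = p x := LinearMap.congr_fun hα x
  intro g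
  let β' : ker p' →ₗ[R] ker p := β.restrict fun y hy =>
    mem_ker.mpr ((hpβ y).trans (mem_ker.mp hy))
  obtain ⟨G', hG'⟩ := h (g ∘ₗ β')
  -- `β ∘ α` lifts the identity of `N`, so it differs from the identity by a map into `ker p`.
  let δ : P →ₗ[R] ker p := codRestrict _ (β ∘ₗ α - LinearMap.id) fun x => by
    simp [hpβ, hp'α]
  refine ⟨G' ∘ₗ α - g ∘ₗ δ, LinearMap.ext fun k => ?_⟩
  have hαk : α k ∈ ker p' := mem_ker.mpr ((hp'α k).trans (mem_ker.mp k.2))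
  have hG'k : G' (α k) = g (β' ⟨α k, hαk⟩) := LinearMap.congr_fun hG' ⟨α k, hαk⟩
  have hδk : δ k = β' ⟨α k, hαk⟩ - k := rfl
  show G' (α k) - g (δ k) = g k
  rw [hG'k, hδk, map_sub, sub_sub_cancel]

theorem homsExtend_ker_iff [Module.Projective R P] [Module.Projective R P']
    {p : P →ₗ[R] N} {p' : P' →ₗ[R] N} (hp : Function.Surjective p)
    (hp' : Function.Surjective p') : (ker p).HomsExtend M ↔ (ker p').HomsExtend M :=
  ⟨homsExtend_ker_of_homsExtend_ker hp' hp, homsExtend_ker_of_homsExtend_ker hp hp'⟩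

theorem homsExtend_range_iff {P₀ P₁ P₂ : Type*} [AddCommGroup P₀] [Module R P₀]
    [AddCommGroup P₁] [Module R P₁] [AddCommGroup P₂] [Module R P₂]
    {d₂ : P₂ →ₗ[R] P₁} {d₁ : P₁ →ₗ[R] P₀} (hd : Function.Exact d₂ d₁) :
    (range d₁).HomsExtend M ↔ ∀ f : P₁ →ₗ[R] M, f ∘ₗ d₂ = 0 → ∃ g : P₀ →ₗ[R] M, g ∘ₗ d₁ = f := by
  constructor
  · intro h f hf
    have hker : ker d₁ ≤ ker f := by
      intro y hy
      obtain ⟨z, rfl⟩ := (hd y).mp hy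
      exact LinearMap.congr_fun hf z
    obtain ⟨g, hg⟩ := h ((ker d₁).liftQ f hker ∘ₗ d₁.quotKerEquivRange.symm.toLinearMap)
    refine ⟨g, LinearMap.ext fun y => ?_⟩
    have := LinearMap.congr_fun hg ⟨d₁ y, mem_range_self d₁ y⟩
    simpa [quotKerEquivRange_symm_apply_image] using this
  · intro h f
    obtain ⟨g, hg⟩ := h (f ∘ₗ d₁.rangeRestrict) (by
      ext z
      simp [show d₁.rangeRestrict (d₂ z) = 0 from Subtype.ext (hd.apply_apply_eq_zero z)])
    refine ⟨g, LinearMap.ext fun ⟨_, y, hy⟩ => ?_⟩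
    subst hy
    exact LinearMap.congr_fun hg y

end Submodule

theorem CategoryTheory.ProjectiveResolution.ext1Vanishes_iff {R : Type u} [CommRing R]
    {N M : Type u} [AddCommGroup N] [Module R N] [AddCommGroup M] [Module R M]
    (P : ProjectiveResolution (ModuleCat.of R N)) :
    Ext1Vanishes R N M ↔ ∀ f : P.complex.X 1 →ₗ[R] M, f ∘ₗ (P.complex.d 2 1).hom = 0 →
      ∃ g : P.complex.X 0 →ₗ[R] M, g ∘ₗ (P.complex.d 1 0).hom = f := by
  have hExt : Ext1Vanishes R N M ↔
      ((P.complex.linearYonedaObj R (ModuleCat.of R M)).sc' 0 1 2).Exact := by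
    rw [← HomologicalComplex.exactAt_iff' _ 0 1 2 (CochainComplex.prev_nat_succ 0)
      ((ComplexShape.up ℕ).next_eq' rfl), HomologicalComplex.exactAt_iff_isZero_homology,
      Ext1Vanishes, ← (P.isoExt 1 (ModuleCat.of R M)).isZero_iff]
    exact ⟨fun _ => ModuleCat.isZero_of_subsingleton _, ModuleCat.subsingleton_of_isZero⟩
  rw [hExt, ShortComplex.moduleCat_exact_iff]
  constructor
  · intro h f hf
    obtain ⟨g, hg⟩ := h (ModuleCat.ofHom f) (ModuleCat.hom_ext hf)
    exact ⟨g.hom, congrArg ModuleCat.Hom.hom hg⟩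
  · intro h f hf
    obtain ⟨g, hg⟩ := h f.hom (congrArg ModuleCat.Hom.hom hf)
    exact ⟨ModuleCat.ofHom g, ModuleCat.hom_ext hg⟩

open Submodule in
theorem ext1Vanishes_iff_homsExtend_ker {R : Type u} [CommRing R]
    {N P M : Type u} [AddCommGroup N] [Module R N] [AddCommGroup P] [Module R P]
    [AddCommGroup M] [Module R M] [Module.Projective R P] {p : P →ₗ[R] N}
    (hp : Function.Surjective p) : Ext1Vanishes R N M ↔ (LinearMap.ker p).HomsExtend M := by
  obtain ⟨Q⟩ := HasProjectiveResolution.out (Z := ModuleCat.of R N)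
  have : Module.Projective R (Q.complex.X 0) :=
    (IsProjective.iff_projective.{u, u} _).mpr (inferInstanceAs (Projective (Q.complex.X 0)))
  have hexact₁ : Function.Exact (Q.complex.d 2 1).hom (Q.complex.d 1 0).hom :=
    (ShortComplex.ShortExact.moduleCat_exact_iff_function_exact _).mp (Q.exact_succ 0)
  have hrange : LinearMap.range (Q.complex.d 1 0).hom = LinearMap.ker (Q.π.f 0).hom :=
    Q.exact₀.moduleCat_range_eq_ker
  have hsurj : Function.Surjective (Q.π.f 0).hom :=
    (ModuleCat.epi_iff_surjective _).mp inferInstance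
  rw [Q.ext1Vanishes_iff, ← homsExtend_range_iff hexact₁, hrange]
  exact homsExtend_ker_iff hsurj hp

theorem ext1Vanishes_quotient_iff_homsExtend {R : Type u} [CommRing R] {M : Type u}
    [AddCommGroup M] [Module R M] (I : Ideal R) : Ext1Vanishes R (R ⧸ I) M ↔ I.HomsExtend M := by
  rw [ext1Vanishes_iff_homsExtend_ker I.mkQ_surjective, Submodule.ker_mkQ]

/-- If `M` is a Lucas module, then `Ext¹_R(R/I, M) = 0` for every semi-regular
ideal `I` of `R` (not necessarily finitely generated). -/
theorem ext_vanishes_of_semiRegular (R : Type u) [CommRing R]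
    (M : Type u) [AddCommGroup M] [Module R M] (hM : IsLucasModule R M)
    (I : Ideal R) (hI : I.IsSemiRegular) :
    Ext1Vanishes R (R ⧸ I) M := by
  obtain ⟨J, hJI, hJfg, hJdense⟩ := hI
  have hJQ : J.IsInQ := ⟨hJfg, J, le_rfl, hJfg, hJdense⟩
  rw [ext1Vanishes_quotient_iff_homsExtend]
  exact Ideal.homsExtend_of_le hJI ((ext1Vanishes_quotient_iff_homsExtend J).mp (hM.2 J hJQ))
    fun x hx => hM.1 x ⟨J, hJQ, hx⟩
end

section
/- Let R be a commutative ring, M a 𝒬-torsion-free R-module, and L a Lucas R-module containing M as an essential submodule such that L/M is 𝒬-torsion. Then the inclusion map M → L is an ℒ-envelope of M, where ℒ is the class of all Lucas R-modules. -/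
open CategoryTheory

universe u

/-!
`Ext¹(R/I, F) = 0` says that every homomorphism `I → F` is multiplication by an element of `F`:
compute `Ext¹` with a projective resolution `P₁ → P₀ → R/I`; a lift `g : P₀ → R` of `P₀ → R/I`
sends `d(P₁)` into `I`, so `φ ∘ g ∘ d` is a cocycle, hence of the form `h ∘ d`, and `h` and `φ`
glue to a map `R → F`. Consequently a map `f : M → F` into a Lucas module extends to `L`: for
`x ∈ L` choose `I ∈ 𝒬` with `I x ⊆ M` and `g x` with `a • g x = f (a • x)` for `a ∈ I`;
𝒬-torsion-freeness of `F` makes `g` linear. The same torsion-freeness shows that a map out of `L`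
is determined by its restriction to `M`, so an endomorphism of `L` fixing `M` is the identity.
-/

section Ext

variable {R : Type u} [CommRing R] {A F : Type u} [AddCommGroup A] [Module R A]
  [AddCommGroup F] [Module R F]

theorem Ext1Vanishes.exists_d_comp_eq (hext : Ext1Vanishes R A F)
    (P : ProjectiveResolution (ModuleCat.of R A)) (f : P.complex.X 1 ⟶ ModuleCat.of R F)
    (hf : P.complex.d 2 1 ≫ f = 0) : ∃ g, P.complex.d 1 0 ≫ g = f := by
  let K := P.complex.linearYonedaObj R (ModuleCat.of R F)
  have hK : K.ExactAt 1 := by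
    rw [HomologicalComplex.exactAt_iff_isZero_homology]
    have : Subsingleton (K.homology 1) :=
      @Equiv.subsingleton _ _ (P.isoExt 1 _).toLinearEquiv.toEquiv.symm hext
    exact ModuleCat.isZero_of_subsingleton _
  rw [K.exactAt_iff' 0 1 2 (by simp) (by simp), ShortComplex.moduleCat_exact_iff] at hK
  exact hK f hf

theorem Ext1Vanishes.exists_eq_smul {I : Ideal R} (hext : Ext1Vanishes R (R ⧸ I) F)
    (φ : I →ₗ[R] F) : ∃ y : F, ∀ a : I, φ a = (a : R) • y := by
  let P := ProjectiveResolution.of (ModuleCat.of R (R ⧸ I))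
  let ε : P.complex.X 0 ⟶ ModuleCat.of R (R ⧸ I) := P.π.f 0
  let d := P.complex.d 1 0
  have : Epi (ModuleCat.ofHom I.mkQ) := (ModuleCat.epi_iff_surjective _).2 I.mkQ_surjective
  let g : P.complex.X 0 ⟶ ModuleCat.of R R := Projective.factorThru ε (ModuleCat.ofHom I.mkQ)
  have hg (p) : I.mkQ (g p) = ε p :=
    congr($(Projective.factorThru_comp ε (ModuleCat.ofHom I.mkQ)) p)
  have hg_mem {p} : g p ∈ I ↔ ε p = 0 := by
    rw [← hg, Submodule.mkQ_apply, Submodule.Quotient.mk_eq_zero]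
  have hgd (q) : g (d q) ∈ I := hg_mem.2 congr($(P.complex_d_comp_π_f_zero) q)
  let c : P.complex.X 1 →ₗ[R] I := LinearMap.codRestrict I (g.hom ∘ₗ d.hom) hgd
  obtain ⟨h, hh⟩ := hext.exists_d_comp_eq P (ModuleCat.ofHom (φ ∘ₗ c)) (by
    ext q
    have hdd : d (P.complex.d 2 1 q) = 0 := congr($(P.complex.d_comp_d 2 1 0) q)
    have hc : c (P.complex.d 2 1 q) = 0 := Subtype.ext (by
      change g (d _) = 0
      rw [hdd, map_zero])
    exact congr(φ $hc).trans (map_zero φ))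
  have hφg (p) (hp : g p ∈ I) : h p = φ ⟨g p, hp⟩ := by
    have hexact := P.exact₀
    rw [ShortComplex.moduleCat_exact_iff] at hexact
    obtain ⟨q, rfl⟩ := hexact p (hg_mem.1 hp)
    exact congr($hh q)
  obtain ⟨p₁, hp₁⟩ : ∃ p, ε p = I.mkQ 1 :=
    (ModuleCat.epi_iff_surjective ε).1 (inferInstanceAs (Epi (P.π.f 0))) _
  have h1 : 1 - g p₁ ∈ I := by
    rw [← Submodule.Quotient.mk_eq_zero, Submodule.Quotient.mk_sub, ← Submodule.mkQ_apply,
      ← Submodule.mkQ_apply, hg, hp₁, sub_self]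
  refine ⟨h p₁ + φ ⟨1 - g p₁, h1⟩, fun a => ?_⟩
  have hmem : g ((a : R) • p₁) ∈ I := by
    rw [map_smul, smul_eq_mul]
    exact I.mul_mem_right _ a.2
  calc φ a = φ (⟨g ((a : R) • p₁), hmem⟩ + (a : R) • ⟨1 - g p₁, h1⟩) := by
        congr 1
        ext
        simp only [map_smul, smul_eq_mul, Submodule.coe_add, Submodule.coe_smul]
        ring
    _ = (a : R) • (h p₁ + φ ⟨1 - g p₁, h1⟩) := by
        rw [map_add, ← hφg, map_smul, map_smul, smul_add]

end Ext

section Torsion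

variable {R : Type u} [CommRing R]

theorem Ideal.IsDense.mul {I J : Ideal R} (hI : I.IsDense) (hJ : J.IsDense) :
    (I * J).IsDense := fun r hr =>
  hI r fun a ha => hJ (a * r) fun b hb => by
    rw [← mul_assoc, mul_comm b a]
    exact hr _ (Ideal.mul_mem_mul ha hb)

theorem Ideal.IsInQ.mul {I J : Ideal R} (hI : I.IsInQ) (hJ : J.IsInQ) : (I * J).IsInQ := by
  obtain ⟨hIfg, I', hI'I, hI'fg, hI'⟩ := hI
  obtain ⟨hJfg, J', hJ'J, hJ'fg, hJ'⟩ := hJ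
  exact ⟨hIfg.mul hJfg, I' * J', Ideal.mul_mono hI'I hJ'J, hI'fg.mul hJ'fg, hI'.mul hJ'⟩

variable {L F : Type u} [AddCommGroup L] [Module R L] [AddCommGroup F] [Module R F]

theorem IsQTorsionFree.eq_of_smul_eq (hF : IsQTorsionFree R F) {x y : F} {I : Ideal R}
    (hI : I.IsInQ) (h : ∀ a ∈ I, a • x = a • y) : x = y :=
  sub_eq_zero.1 <| hF _ ⟨I, hI, fun a ha => by rw [smul_sub, h a ha, sub_self]⟩

theorem IsQTorsion.exists_smul_mem {M : Submodule R L} (htor : IsQTorsion R (L ⧸ M)) (x : L) :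
    ∃ I : Ideal R, I.IsInQ ∧ ∀ a ∈ I, a • x ∈ M := by
  obtain ⟨I, hI, hIx⟩ := htor (Submodule.Quotient.mk x)
  exact ⟨I, hI, fun a ha => (Submodule.Quotient.mk_eq_zero M).1 (hIx a ha)⟩

theorem LinearMap.eq_of_comp_subtype_eq {M : Submodule R L} (hF : IsQTorsionFree R F)
    (htor : IsQTorsion R (L ⧸ M)) {g₁ g₂ : L →ₗ[R] F}
    (h : g₁ ∘ₗ M.subtype = g₂ ∘ₗ M.subtype) : g₁ = g₂ := by
  ext x
  obtain ⟨I, hI, hIx⟩ := htor.exists_smul_mem x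
  refine hF.eq_of_smul_eq hI fun a ha => ?_
  rw [← map_smul, ← map_smul]
  exact LinearMap.congr_fun h ⟨a • x, hIx a ha⟩

end Torsion

section Extension

variable {R : Type u} [CommRing R] {L F : Type u} [AddCommGroup L] [Module R L]
  [AddCommGroup F] [Module R F] {M : Submodule R L}

theorem IsLucasModule.exists_smul_eq_of_smul_mem (hF : IsLucasModule R F)
    (htor : IsQTorsion R (L ⧸ M)) (f : M →ₗ[R] F) (x : L) :
    ∃ y : F, ∀ (a : R) (m : M), (m : L) = a • x → f m = a • y := by
  obtain ⟨I, hI, hIx⟩ := htor.exists_smul_mem x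
  let ψ : I →ₗ[R] M := LinearMap.codRestrict M (LinearMap.toSpanSingleton R L x ∘ₗ I.subtype)
    fun b => hIx b b.2
  have hψ (b : I) : (ψ b : L) = (b : R) • x := rfl
  obtain ⟨y, hy⟩ := (hF.2 I hI).exists_eq_smul (f ∘ₗ ψ)
  refine ⟨y, fun a m hm => hF.1.eq_of_smul_eq hI fun b hb => ?_⟩
  calc b • f m = f (a • ψ ⟨b, hb⟩) := by
        rw [← map_smul]
        congr 1
        ext
        change b • (m : L) = a • b • x
        rw [hm]
        exact smul_comm b a x
    _ = b • a • y := by rw [map_smul, ← LinearMap.comp_apply, hy, smul_comm]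

theorem IsLucasModule.exists_comp_subtype_eq (hF : IsLucasModule R F)
    (htor : IsQTorsion R (L ⧸ M)) (f : M →ₗ[R] F) :
    ∃ g : L →ₗ[R] F, g ∘ₗ M.subtype = f := by
  choose g hg using hF.exists_smul_eq_of_smul_mem htor f
  have hg' (x : L) (a : R) (hax : a • x ∈ M) : a • g x = f ⟨a • x, hax⟩ :=
    (hg x a ⟨a • x, hax⟩ rfl).symm
  have hadd (x x' : L) : g (x + x') = g x + g x' := by
    obtain ⟨I, hI, hIx⟩ := htor.exists_smul_mem x
    obtain ⟨J, hJ, hJx'⟩ := htor.exists_smul_mem x'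
    refine hF.1.eq_of_smul_eq (hI.mul hJ) fun a ha => ?_
    have hx : a • x ∈ M := hIx a (Ideal.mul_le_left ha)
    have hx' : a • x' ∈ M := hJx' a (Ideal.mul_le_right ha)
    have hxx' : a • (x + x') ∈ M := by rw [smul_add]; exact M.add_mem hx hx'
    calc a • g (x + x') = f ⟨a • (x + x'), hxx'⟩ := hg' _ _ hxx'
      _ = f (⟨a • x, hx⟩ + ⟨a • x', hx'⟩) := congr_arg f (Subtype.ext (smul_add a x x'))
      _ = a • (g x + g x') := by rw [map_add, ← hg', ← hg', smul_add]
  have hsmul (r : R) (x : L) : g (r • x) = r • g x := by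
    obtain ⟨I, hI, hIx⟩ := htor.exists_smul_mem x
    refine hF.1.eq_of_smul_eq hI fun a ha => ?_
    have hrx : a • r • x ∈ M := by rw [smul_comm]; exact M.smul_mem r (hIx a ha)
    calc a • g (r • x) = f ⟨a • r • x, hrx⟩ := hg' _ _ hrx
      _ = f (r • ⟨a • x, hIx a ha⟩) := congr_arg f (Subtype.ext (smul_comm a r x))
      _ = a • r • g x := by rw [map_smul, ← hg', smul_comm]
  refine ⟨{ toFun := g, map_add' := hadd, map_smul' := hsmul }, ?_⟩
  ext m
  exact ((hg m 1 m (one_smul R _).symm).trans (one_smul R _)).symm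

end Extension

theorem inclusion_is_lucas_envelope_general (R : Type u) [CommRing R]
    (L : Type u) [AddCommGroup L] [Module R L] (hL : IsLucasModule R L)
    (M : Submodule R L) (htor : IsQTorsion R (L ⧸ M)) :
    (∀ F' : ModuleCat.{u} R, IsLucasModule R F' →
      Function.Surjective (fun h : L →ₗ[R] F' => h.comp M.subtype)) ∧
    (∀ h : L →ₗ[R] L, h.comp M.subtype = M.subtype → Function.Bijective h) := by
  refine ⟨fun F' hF' f => hF'.exists_comp_subtype_eq htor f, fun h hh => ?_⟩
  obtain rfl : h = LinearMap.id := LinearMap.eq_of_comp_subtype_eq hL.1 htor hh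
  exact Function.bijective_id

/-- If `M` is a `𝒬`-torsion-free submodule of a Lucas module `L`, essential in
`L`, with `L/M` `𝒬`-torsion, then the inclusion `M → L` is an `ℒ`-envelope of `M`, where
`ℒ` is the class of Lucas modules. -/
theorem inclusion_is_lucas_envelope (R : Type u) [CommRing R]
    (L : Type u) [AddCommGroup L] [Module R L] (hL : IsLucasModule R L)
    (M : Submodule R L) (hM : IsQTorsionFree R M)
    (hess : ∀ N : Submodule R L, M ⊓ N = ⊥ → N = ⊥)
    (htor : IsQTorsion R (L ⧸ M)) :
    (∀ F' : ModuleCat.{u} R, IsLucasModule R F' →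
      Function.Surjective (fun h : L →ₗ[R] F' => h.comp M.subtype)) ∧
    (∀ h : L →ₗ[R] L, h.comp M.subtype = M.subtype → Function.Bijective h) :=
  inclusion_is_lucas_envelope_general R L hL M htor
end

section
/- Let R be a commutative ring and {M_i, φ_{i,j} | i, j ∈ Γ} a direct system of Lucas R-modules over a directed index set Γ. Then the direct limit lim→ M_i is a Lucas module. -/
open CategoryTheory

universe u

/-!
The short exact sequence `0 → I → R → R ⧸ I → 0` begins a projective resolution of `R ⧸ I`,
so `Ext¹(R ⧸ I, N) = 0` exactly when every homomorphism `I → N` extends to `R`.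

Let `I = (a₁, …, aₙ)`. A homomorphism `I → lim M` is given by its values `g_k` on the
generators, which satisfy `a_k g_l = a_l g_k`; the `g_k` and these finitely many relations are
realised at a single stage `M_j`. There they define a homomorphism `I → M_j`: a combination
`∑ c_k g_k` with `∑ c_k a_k = 0` is killed by every `a_l`, hence is zero because `M_j` has no
`I`-torsion. Extending this map to `R` inside the Lucas module `M_j` and pushing it to the limit
extends the original map. Torsion-freeness passes to the limit for the same reason: being killed
by finitely many generators is already witnessed at some stage.
-/

open Limits Projective Submodule

noncomputable section

universe v

namespace CategoryTheory.Projective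

variable {C : Type u} [Category.{v} C] [Abelian C] [EnoughProjectives C]

lemma d_comp {X Y : C} (f : X ⟶ Y) : d f ≫ f = 0 := by
  show (π (kernel f) ≫ kernel.ι f) ≫ f = 0
  simp

end CategoryTheory.Projective

namespace CategoryTheory.ProjectiveResolution

variable {C : Type u} [Category.{v} C] [Abelian C] [EnoughProjectives C]
  {P Z : C} (π : P ⟶ Z)

/-- Unlike `ProjectiveResolution.ofComplex`, whose degree-`0` term is an arbitrary projective
cover, this complex starts with the given `π`. -/
def ofEpiComplex : ChainComplex C ℕ :=
  ChainComplex.mk' P (syzygies π) (d π) (fun f => ⟨_, d f, d_comp f⟩)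

lemma ofEpiComplex_d_1_0 : (ofEpiComplex π).d 1 0 = d π := by
  simp [ofEpiComplex]

lemma ofEpiComplex_exactAt_succ (n : ℕ) : (ofEpiComplex π).ExactAt (n + 1) := by
  rw [HomologicalComplex.exactAt_iff' _ (n + 1 + 1) (n + 1) n (by simp) (by simp)]
  refine ShortComplex.exact_of_iso ?_ (exact_d_f ((ofEpiComplex π).d (n + 1) n))
  refine ShortComplex.isoMk
    (ChainComplex.mk'XIso P (syzygies π) (d π) (fun f => ⟨_, d f, d_comp f⟩) n).symm
    (Iso.refl _) (Iso.refl _) ?_ ?_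
  · exact ((Iso.inv_comp_eq _).2 (ChainComplex.mk'_d _ _ _ _ n)).trans (Category.comp_id _).symm
  · exact (Category.id_comp _).trans (Category.comp_id _).symm

variable [Projective P] [Epi π]

instance (n : ℕ) : Projective ((ofEpiComplex π).X n) := by
  obtain (_ | _ | _ | n) := n
  · exact ‹Projective P›
  all_goals apply Projective.projective_over

def ofEpi : ProjectiveResolution Z where
  complex := ofEpiComplex π
  π := (ChainComplex.toSingle₀Equiv _ _).symm
    ⟨π, by rw [ofEpiComplex_d_1_0]; exact d_comp π⟩
  quasiIso := ⟨fun n => by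
    cases n
    · rw [ChainComplex.quasiIsoAt₀_iff, ShortComplex.quasiIso_iff_of_zeros']
      · refine (ShortComplex.exact_and_epi_g_iff_of_iso ?_).2
          ⟨exact_d_f π, by dsimp; infer_instance⟩
        exact ShortComplex.isoMk (Iso.refl _) (Iso.refl _) (Iso.refl _)
          (by
            simp only [ofEpiComplex, ChainComplex.mk'_X_0, ChainComplex.mk'_X_1, Iso.refl_hom,
              HomologicalComplex.shortComplexFunctor'_obj_f, ChainComplex.mk'_d_1_0]
            exact (Category.id_comp _).trans (Category.comp_id _).symm)
          (by
            simp only [Iso.refl_hom, HomologicalComplex.shortComplexFunctor'_map_τ₂]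
            exact (Category.id_comp _).trans ((Category.comp_id _).trans
              (ChainComplex.toSingle₀Equiv_symm_apply_f_zero (C := ofEpiComplex π) π _)).symm)
      all_goals rfl
    · rw [quasiIsoAt_iff_exactAt']
      · apply ofEpiComplex_exactAt_succ
      · apply ChainComplex.exactAt_succ_single_obj⟩

end CategoryTheory.ProjectiveResolution

theorem CategoryTheory.ProjectiveResolution.subsingleton_ext_one_iff {R : Type u} [CommRing R]
    {Z : ModuleCat.{u} R} (P : ProjectiveResolution Z) (Y : ModuleCat.{u} R) :
    Subsingleton (((Ext R (ModuleCat.{u} R) 1).obj (Opposite.op Z)).obj Y) ↔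
      ∀ g : P.complex.X 1 →ₗ[R] Y, g ∘ₗ (P.complex.d 2 1).hom = 0 →
        ∃ h : P.complex.X 0 →ₗ[R] Y, h ∘ₗ (P.complex.d 1 0).hom = g := by
  rw [← ModuleCat.isZero_iff_subsingleton, (P.isoExt 1 Y).isZero_iff,
    ← HomologicalComplex.exactAt_iff_isZero_homology,
    HomologicalComplex.exactAt_iff' _ 0 1 2 (by simp) (by simp), ShortComplex.moduleCat_exact_iff]
  constructor
  · intro hexact g hg
    obtain ⟨h, hh⟩ := hexact (ModuleCat.ofHom g)
      (ModuleCat.hom_ext (LinearMap.ext fun x => LinearMap.congr_fun hg x))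
    exact ⟨h.hom, LinearMap.ext fun x => ConcreteCategory.congr_hom hh x⟩
  · intro hext g hg
    obtain ⟨h, hh⟩ := hext g.hom (LinearMap.ext fun x => ConcreteCategory.congr_hom hg x)
    exact ⟨ModuleCat.ofHom h,
      ModuleCat.hom_ext (LinearMap.ext fun x => LinearMap.congr_fun hh x)⟩

namespace LinearMap

variable {R : Type*} [Ring R] {A B C Y : Type*} [AddCommGroup A] [Module R A]
  [AddCommGroup B] [Module R B] [AddCommGroup C] [Module R C] [AddCommGroup Y] [Module R Y]

theorem exists_comp_eq_of_ker_le {π : A →ₗ[R] B} (hπ : Function.Surjective π) {τ : A →ₗ[R] Y}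
    (h : ker π ≤ ker τ) : ∃ χ : B →ₗ[R] Y, χ ∘ₗ π = τ :=
  ⟨(ker π).liftQ τ h ∘ₗ (π.quotKerEquivOfSurjective hπ).symm.toLinearMap, by ext; simp⟩

theorem forall_exists_comp_eq_iff_of_range_eq_ker (d₂ : A →ₗ[R] B) (d₁ : B →ₗ[R] C)
    (hexact : range d₂ = ker d₁) :
    (∀ g : B →ₗ[R] Y, g ∘ₗ d₂ = 0 → ∃ h : C →ₗ[R] Y, h ∘ₗ d₁ = g) ↔
      ∀ f : range d₁ →ₗ[R] Y, ∃ h : C →ₗ[R] Y, h ∘ₗ (range d₁).subtype = f := by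
  constructor
  · intro hcocycle f
    have hd : d₁.rangeRestrict ∘ₗ d₂ = 0 :=
      range_le_ker_iff.1 (by rw [ker_rangeRestrict, hexact])
    obtain ⟨h, hh⟩ := hcocycle (f ∘ₗ d₁.rangeRestrict) (by rw [comp_assoc, hd, comp_zero])
    refine ⟨h, ext fun ⟨_, x, rfl⟩ => ?_⟩
    exact LinearMap.congr_fun hh x
  · intro hext g hg
    have hker : ker d₁.rangeRestrict ≤ ker g := by
      rw [ker_rangeRestrict, ← hexact, range_le_ker_iff, hg]
    obtain ⟨f, rfl⟩ := exists_comp_eq_of_ker_le d₁.surjective_rangeRestrict hker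
    obtain ⟨h, rfl⟩ := hext f
    exact ⟨h, by ext; simp⟩

end LinearMap

namespace ModuleCat

variable {R : Type u} [CommRing R]

theorem subsingleton_ext_one_iff_of_epi {P Z : ModuleCat.{u} R} (π : P ⟶ Z) [Projective P]
    [Epi π] (Y : ModuleCat.{u} R) :
    Subsingleton (((Ext R (ModuleCat.{u} R) 1).obj (Opposite.op Z)).obj Y) ↔
      ∀ g : LinearMap.ker π.hom →ₗ[R] Y,
        ∃ h : P →ₗ[R] Y, h ∘ₗ (LinearMap.ker π.hom).subtype = g := by
  let Q := ProjectiveResolution.ofEpi π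
  have hexact :
      LinearMap.range (Q.complex.d 2 1).hom = LinearMap.ker (Q.complex.d 1 0).hom := by
    have := ProjectiveResolution.ofEpiComplex_exactAt_succ π 0
    rwa [HomologicalComplex.exactAt_iff' _ 2 1 0 (by simp) (by simp),
      ShortComplex.moduleCat_exact_iff_range_eq_ker] at this
  have hrange : LinearMap.range (Q.complex.d 1 0).hom = LinearMap.ker π.hom := by
    rw [show Q.complex.d 1 0 = Projective.d π from ProjectiveResolution.ofEpiComplex_d_1_0 π]
    exact (ShortComplex.moduleCat_exact_iff_range_eq_ker _).1 (exact_d_f π)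
  rw [Q.subsingleton_ext_one_iff,
    LinearMap.forall_exists_comp_eq_iff_of_range_eq_ker _ _ hexact, hrange]
  rfl

end ModuleCat

namespace Ideal

variable {R N : Type*} [CommRing R] [AddCommGroup N] [Module R N]

theorem exists_comp_eq_linearCombination {I : Ideal R} {n : ℕ} {π : (Fin n → R) →ₗ[R] I}
    (hπ : Function.Surjective π) (htf : torsionBySet R N I = ⊥) {g : Fin n → N}
    (hg : ∀ k l, (π (Pi.single k 1) : R) • g l = (π (Pi.single l 1) : R) • g k) :
    ∃ χ : I →ₗ[R] N, χ ∘ₗ π = Fintype.linearCombination R g := by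
  set τ := Fintype.linearCombination R g
  -- both sides are bilinear in `(c, d)`, and on pairs of basis vectors this is `hg`
  have hsymm : ∀ c d, (π d : R) • τ c = (π c : R) • τ d := by
    let Φ := (LinearMap.lsmul R N).compl₁₂ (I.subtype ∘ₗ π) τ
    have : Φ = Φ.flip := by
      ext k l
      simpa [Φ, τ] using hg k l
    intro c d
    exact LinearMap.congr_fun₂ this d c
  refine LinearMap.exists_comp_eq_of_ker_le hπ fun c hc => ?_
  rw [LinearMap.mem_ker] at hc ⊢
  rw [← Submodule.mem_bot R, ← htf, mem_torsionBySet_iff]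
  rintro ⟨x, hx⟩
  obtain ⟨d, hd⟩ := hπ ⟨x, hx⟩
  simpa [hc, hd] using hsymm c d

end Ideal

namespace Module.DirectLimit

section Finite

variable {R : Type*} [Semiring R] {ι : Type*} [Preorder ι] [IsDirectedOrder ι] [DecidableEq ι]
  {M : ι → Type*} [∀ i, AddCommMonoid (M i)] [∀ i, Module R (M i)]
  {f : ∀ i j, i ≤ j → M i →ₗ[R] M j}

theorem exists_of_finite [Nonempty ι] {α : Type*} [Finite α] (z : α → DirectLimit M f) :
    ∃ j, ∃ y : α → M j, ∀ a, of R ι M f j (y a) = z a := by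
  choose i x hx using fun a => exists_of (z a)
  obtain ⟨k, hk⟩ := Finite.bddAbove_range i
  exact ⟨k, fun a => f (i a) k (hk ⟨a, rfl⟩) (x a), fun a => by rw [of_f, hx]⟩

variable [DirectedSystem M (f · · ·)]

theorem exists_map_eq_zero_of_finite {α : Type*} [Finite α] {i : ι} {x : α → M i}
    (hx : ∀ a, of R ι M f i (x a) = 0) : ∃ j, ∃ hij : i ≤ j, ∀ a, f i j hij (x a) = 0 := by
  choose j hij hj using fun a => of.zero_exact (hx a)
  have : Nonempty ι := ⟨i⟩
  obtain ⟨k, hk⟩ := Finite.bddAbove_range j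
  obtain ⟨l, hil, hkl⟩ := exists_ge_ge i k
  refine ⟨l, hil, fun a => ?_⟩
  rw [← DirectedSystem.map_map' f (hij a) ((hk ⟨a, rfl⟩).trans hkl), hj, map_zero]

end Finite

variable {R : Type*} [CommRing R] {ι : Type*} [Preorder ι] [IsDirectedOrder ι] [DecidableEq ι]
  [Nonempty ι] {M : ι → Type*} [∀ i, AddCommGroup (M i)] [∀ i, Module R (M i)]
  {f : ∀ i j, i ≤ j → M i →ₗ[R] M j} [DirectedSystem M (f · · ·)]

theorem torsionBySet_eq_bot_of_fg {I : Ideal R} (hI : I.FG)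
    (htf : ∀ i, torsionBySet R (M i) I = ⊥) : torsionBySet R (DirectLimit M f) I = ⊥ := by
  obtain ⟨s, rfl⟩ := hI
  replace htf i : torsionBySet R (M i) s = ⊥ := by rw [torsionBySet_eq_torsionBySet_span, htf]
  rw [← torsionBySet_eq_torsionBySet_span]
  refine (Submodule.eq_bot_iff _).2 fun z hz => ?_
  obtain ⟨i, x, rfl⟩ := exists_of z
  rw [mem_torsionBySet_iff] at hz
  obtain ⟨j, hij, hj⟩ := exists_map_eq_zero_of_finite
    (x := fun a : (s : Set R) => (a : R) • x) fun a => by rw [map_smul, hz a]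
  have : f i j hij x ∈ torsionBySet R (M j) s :=
    (mem_torsionBySet_iff _ _).2 fun a => by rw [← map_smul, hj a]
  rw [htf j, Submodule.mem_bot] at this
  rw [← of_f (hij := hij), this, map_zero]

theorem exists_of_comp_eq_of_fg {I : Ideal R} (hI : I.FG)
    (htf : ∀ i, torsionBySet R (M i) I = ⊥) (F : I →ₗ[R] DirectLimit M f) :
    ∃ j, ∃ χ : I →ₗ[R] M j, of R ι M f j ∘ₗ χ = F := by
  have : Module.Finite R I := Module.Finite.iff_fg.2 hI
  obtain ⟨n, π, hπ⟩ := Module.Finite.exists_fin' R I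
  set e : Fin n → I := fun k => π (Pi.single k 1)
  obtain ⟨i, y, hy⟩ := exists_of_finite fun k => F (e k)
  have hrel : ∀ k l, of R ι M f i ((e k : R) • y l - (e l : R) • y k) = 0 := by
    intro k l
    have : (e k : R) • e l = (e l : R) • e k := Subtype.ext (mul_comm _ _)
    rw [map_sub, map_smul, map_smul, hy, hy, ← F.map_smul, ← F.map_smul, this, sub_self]
  obtain ⟨j, hij, hj⟩ := exists_map_eq_zero_of_finite fun p : Fin n × Fin n => hrel p.1 p.2
  obtain ⟨χ, hχ⟩ := Ideal.exists_comp_eq_linearCombination hπ (htf j)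
    (g := fun k => f i j hij (y k)) fun k l => by simpa [sub_eq_zero] using hj (k, l)
  refine ⟨j, χ, (LinearMap.cancel_right hπ).1 ?_⟩
  rw [LinearMap.comp_assoc, hχ]
  ext k
  simp [of_f, hy, e]

end Module.DirectLimit

theorem ext1Vanishes_quotient_iff {R : Type u} [CommRing R] (I : Ideal R) (N : Type u)
    [AddCommGroup N] [Module R N] :
    Ext1Vanishes R (R ⧸ I) N ↔ ∀ g : I →ₗ[R] N, ∃ h : R →ₗ[R] N, h ∘ₗ I.subtype = g := by
  have : Epi (ModuleCat.ofHom I.mkQ) := (ModuleCat.epi_iff_surjective _).2 I.mkQ_surjective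
  rw [Ext1Vanishes, ModuleCat.subsingleton_ext_one_iff_of_epi (ModuleCat.ofHom I.mkQ),
    ModuleCat.hom_ofHom, Submodule.ker_mkQ]

theorem isLucasModule_iff {R : Type u} [CommRing R] {N : Type u} [AddCommGroup N]
    [Module R N] :
    IsLucasModule R N ↔ ∀ I : Ideal R, I.IsInQ →
      torsionBySet R N I = ⊥ ∧ ∀ g : I →ₗ[R] N, ∃ h : R →ₗ[R] N, h ∘ₗ I.subtype = g := by
  simp only [IsLucasModule, IsQTorsionFree, ext1Vanishes_quotient_iff, imp_and, forall_and,
    Submodule.eq_bot_iff, mem_torsionBySet_iff, Subtype.forall, SetLike.mem_coe]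
  exact and_congr_left' ⟨fun h I hI x hx => h x ⟨I, hI, hx⟩, fun h x ⟨I, hI, hx⟩ => h I hI x hx⟩

theorem isLucasModule_of_subsingleton {R : Type u} [CommRing R] {N : Type u} [AddCommGroup N]
    [Module R N] [Subsingleton N] : IsLucasModule R N :=
  isLucasModule_iff.2 fun _ _ => ⟨Subsingleton.elim _ _, fun _ => ⟨0, Subsingleton.elim _ _⟩⟩

end

/-- The direct limit of a direct system of Lucas modules over a directed
index set is a Lucas module. -/
theorem directLimit_lucas (R : Type u) [CommRing R]
    (Γ : Type u) [Preorder Γ] [IsDirected Γ (· ≤ ·)] [DecidableEq Γ]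
    (M : Γ → Type u) [∀ i, AddCommGroup (M i)] [∀ i, Module R (M i)]
    (φ : ∀ i j : Γ, i ≤ j → (M i →ₗ[R] M j))
    [DirectedSystem M (fun i j h => φ i j h)]
    (hM : ∀ i, IsLucasModule R (M i)) :
    IsLucasModule R (Module.DirectLimit M φ) := by
  rcases isEmpty_or_nonempty Γ with hΓ | hΓ
  · exact isLucasModule_of_subsingleton
  simp only [isLucasModule_iff] at hM ⊢
  intro I hI
  have htf i : torsionBySet R (M i) I = ⊥ := (hM i I hI).1
  refine ⟨Module.DirectLimit.torsionBySet_eq_bot_of_fg hI.1 htf, fun F => ?_⟩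
  obtain ⟨j, χ, rfl⟩ := Module.DirectLimit.exists_of_comp_eq_of_fg hI.1 htf F
  obtain ⟨h, hh⟩ := (hM j I hI).2 χ
  exact ⟨Module.DirectLimit.of R Γ M φ j ∘ₗ h, by rw [LinearMap.comp_assoc, hh]⟩
end
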